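/- arXiv:0802.2592 — 6 statements merged into one kernel-verified Lean document; each statement's English description precedes it below -/
import Mathlib

section
/- For x ∈ W^{n+1} = {x ∈ ℤ^{n+1} : x_1 < ... < x_{n+1}}, define W^n(x) = {y ∈ ℤ^n : x_1 ≤ y_1 < x_2 ≤ y_2 < ... ≤ y_n < x_{n+1}} and λ^n(x,y) = n! · h_n(y)/h_{n+1}(x), where h_m(z) = Π_{i<j}(z_j − z_i). Then Σ_{y ∈ W^n(x)} λ^n(x,y) = 1, i.e., λ^n(x,·) is a probability measure on W^n(x). -/
open Matrix BigOperators

/-- Kronecker delta `δ_i : ℤ → ℝ`. -/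
noncomputable def deltaK (i : ℤ) : ℤ → ℝ := fun x => if x = i then 1 else 0

/-- Convolution `(f * g)(x) = Σ_{s+t=x} f(s) g(t)`. -/
noncomputable def conv (f g : ℤ → ℝ) : ℤ → ℝ := fun x => ∑' s : ℤ, f s * g (x - s)

/-- The Bernoulli(1/2) step distribution `φ = (δ_0 + δ_1)/2`. -/
noncomputable def phiB : ℤ → ℝ := fun x => (deltaK 0 x + deltaK 1 x) / 2

/-- `t`-fold convolution power of `φ`. -/
noncomputable def phiPow : ℕ → ℤ → ℝ
  | 0 => deltaK 0
  | (n+1) => conv (phiPow n) phiB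

/-- `Δ⁻¹ f (x) = Σ_{z ≤ x} f(z)`. -/
noncomputable def Dinv (f : ℤ → ℝ) (x : ℤ) : ℝ := ∑' z : {z : ℤ // z ≤ x}, f z.1

/-- Backward difference `Δ f (x) = f(x) - f(x-1)`. -/
noncomputable def Dd (f : ℤ → ℝ) (x : ℤ) : ℝ := f x - f (x - 1)

/-- Vandermonde product `h_n(z) = Π_{i<j} (z_j - z_i)` (real valued). -/
noncomputable def vand (n : ℕ) (z : Fin n → ℤ) : ℝ :=
  ∏ i : Fin n, ∏ j ∈ Finset.Ioi i, ((z j - z i : ℤ) : ℝ)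

/-- The interlacing cone `W^{n+1,n}`: `x_1 ≤ y_1 < x_2 ≤ … ≤ y_n < x_{n+1}`. -/
def interlace (n : ℕ) (x : Fin (n+1) → ℤ) (y : Fin n → ℤ) : Prop :=
  ∀ i : Fin n, x i.castSucc ≤ y i ∧ y i < x i.succ

/-- The determinantal kernel `q_t^n((x,y),(x',y'))` (rows indexed by the starting
point `(x,y)`, columns by the end point `(x',y')`). -/
noncomputable def qker (n t : ℕ) (x : Fin (n+1) → ℤ) (y : Fin n → ℤ)
    (x' : Fin (n+1) → ℤ) (y' : Fin n → ℤ) : ℝ :=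
  (Matrix.fromBlocks
    (Matrix.of fun i j : Fin (n+1) => phiPow t (x' j - x i))
    (Matrix.of fun (i : Fin (n+1)) (j : Fin n) =>
      Dinv (phiPow t) (y' j - x i) - if (i : ℕ) ≤ (j : ℕ) then 1 else 0)
    (Matrix.of fun (i : Fin n) (j : Fin (n+1)) => Dd (phiPow t) (x' j - y i))
    (Matrix.of fun i j : Fin n => phiPow t (y' j - y i))).det

/-- `λ^n(x,y) = n! h_n(y)/h_{n+1}(x)`. -/
noncomputable def lam (n : ℕ) (x : Fin (n+1) → ℤ) (y : Fin n → ℤ) : ℝ :=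
  (n.factorial : ℝ) * vand n y / vand (n+1) x

/-- `p_t^{n,+}(y,y') = (h_n(y')/h_n(y)) det[φ^{(t)}(y'_j - y_i)]`. -/
noncomputable def pplus (n t : ℕ) (y y' : Fin n → ℤ) : ℝ :=
  (vand n y' / vand n y) * (Matrix.of fun i j : Fin n => phiPow t (y' j - y i)).det

/-!
Write `h_n(y) = det [(y_i)_j]` in the falling-factorial basis `(t)_j = t(t-1)⋯(t-j+1)`, which
is triangular with respect to the monomials. By multilinearity the sum over the box `W^n(x)` is
the determinant of the row-wise sums, and `Σ_{x_i ≤ t < x_{i+1}} (t)_j` telescopes to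
`((x_{i+1})_{j+1} - (x_i)_{j+1}) / (j+1)`. The factors `1/(j+1)` contribute `1/n!`, and the
resulting matrix of differences of consecutive rows is what remains of `[(x_i)_j]` after
eliminating its first column of ones, so its determinant is `h_{n+1}(x)`.
-/

open Finset Polynomial

section DescPochhammer

variable {R : Type*} [CommRing R]

theorem descPochhammer_eval_add_one_sub_eval (k : ℕ) (r : R) :
    (descPochhammer R (k + 1)).eval (r + 1) - (descPochhammer R (k + 1)).eval r =
      (k + 1) * (descPochhammer R k).eval r := by
  have h_left :
      (descPochhammer R (k + 1)).eval (r + 1) = (r + 1) * (descPochhammer R k).eval r := by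
    simp [descPochhammer_succ_left, eval_comp]
  rw [h_left, descPochhammer_succ_eval]
  ring

theorem mul_sum_Ico_descPochhammer_eval {a b : ℤ} (hab : a ≤ b) (k : ℕ) :
    (k + 1) * ∑ t ∈ Ico a b, (descPochhammer R k).eval (t : R) =
      (descPochhammer R (k + 1)).eval (b : R) - (descPochhammer R (k + 1)).eval (a : R) := by
  induction b, hab using Int.leInduction with
  | base => simp
  | succ b hab ih =>
    rw [← Finset.insert_Ico_right_eq_Ico_add_one hab, sum_insert (by simp), mul_add, ih,
      ← descPochhammer_eval_add_one_sub_eval]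
    push_cast
    ring

theorem det_vandermonde_eq_det_descPochhammer [IsDomain R] {n : ℕ} (v : Fin n → R) :
    (vandermonde v).det = (of fun i j : Fin n => (descPochhammer R j).eval (v i)).det :=
  det_eval_matrixOfPolynomials_eq_det_vandermonde v _ (fun j => descPochhammer_natDegree R j)
    (fun j => monic_descPochhammer R j)

end DescPochhammer

theorem Matrix.det_eq_det_row_sub_pred_of_col_zero_eq_one {R : Type*} [CommRing R] {n : ℕ}
    (B : Matrix (Fin (n + 1)) (Fin (n + 1)) R) (hB : ∀ i, B i 0 = 1) :
    B.det = (of fun i j : Fin n => B i.succ j.succ - B i.castSucc j.succ).det := by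
  let C : Matrix (Fin (n + 1)) (Fin (n + 1)) R :=
    Fin.cases (B 0) (fun i => B i.succ - B i.castSucc)
  have hBC : B.det = C.det :=
    det_eq_of_forall_row_eq_smul_add_pred (fun _ => 1) (fun _ => rfl)
      (fun i j => by simp [C])
  rw [hBC, det_succ_column_zero, Fin.sum_univ_succ]
  simp [C, hB]
  rfl

theorem Matrix.sum_piFinset_det_eq_det_sum {R ι α : Type*} [CommRing R] [Fintype ι]
    [DecidableEq ι] (A : ι → Finset α) (f : ι → α → ι → R) :
    ∑ y ∈ Fintype.piFinset A, (of fun i => f i (y i)).det =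
      (of fun i j => ∑ t ∈ A i, f i t j).det := by
  simp_rw [← Finset.sum_apply]
  exact ((detRowAlternating (R := R) (n := ι)).map_sum_finset f A).symm

theorem vand_eq_det_vandermonde (n : ℕ) (z : Fin n → ℤ) :
    vand n z = (vandermonde fun i => (z i : ℝ)).det := by
  simp [vand, det_vandermonde]

theorem vand_pos {n : ℕ} {z : Fin n → ℤ} (hz : StrictMono z) : 0 < vand n z :=
  prod_pos fun i _ => prod_pos fun j hj => by
    exact_mod_cast sub_pos.mpr (hz (mem_Ioi.mp hj))

theorem factorial_mul_sum_vand_Ico {n : ℕ} {x : Fin (n + 1) → ℤ} (hx : Monotone x) :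
    (n.factorial : ℝ) *
        ∑ y ∈ Fintype.piFinset (fun i : Fin n => Ico (x i.castSucc) (x i.succ)), vand n y =
      vand (n + 1) x := by
  let D : ℕ → ℤ → ℝ := fun k t => (descPochhammer ℝ k).eval (t : ℝ)
  have h_fact : (n.factorial : ℝ) = ∏ j : Fin n, ((j : ℝ) + 1) := by
    rw [← prod_range_add_one_eq_factorial,
      Fin.prod_univ_eq_prod_range (fun j : ℕ => (j : ℝ) + 1)]
    push_cast
    rfl
  calc _ = (n.factorial : ℝ) *
          (of fun i j : Fin n => ∑ t ∈ Ico (x i.castSucc) (x i.succ), D j t).det := by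
        simp_rw [vand_eq_det_vandermonde, det_vandermonde_eq_det_descPochhammer]
        congr 1
        exact Matrix.sum_piFinset_det_eq_det_sum (ι := Fin n) _ fun _ t j => D j t
    _ = (of fun i j : Fin n => D (j + 1) (x i.succ) - D (j + 1) (x i.castSucc)).det := by
        rw [h_fact, ← det_mul_row]
        congr 1
        ext i j
        exact mul_sum_Ico_descPochhammer_eval (hx (Fin.castSucc_le_succ i)) j
    _ = (of fun i j : Fin (n + 1) => D j (x i)).det :=
        (Matrix.det_eq_det_row_sub_pred_of_col_zero_eq_one
          (of fun i j : Fin (n + 1) => D j (x i)) fun _ => by simp [D]).symm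
    _ = vand (n + 1) x := by
        rw [vand_eq_det_vandermonde, det_vandermonde_eq_det_descPochhammer]

/-- `λ^n(x,·)` is a probability measure on `W^n(x)`. -/
theorem lam_sums_to_one (n : ℕ) (x : Fin (n+1) → ℤ) (hx : StrictMono x) :
    ∑' y : {y : Fin n → ℤ // interlace n x y}, lam n x y.1 = 1 := by
  have h_box : interlace n x =
      (· ∈ Fintype.piFinset fun i : Fin n => Ico (x i.castSucc) (x i.succ)) := by
    ext y
    simp [interlace, Fintype.mem_piFinset]
  rw [h_box, Finset.tsum_subtype _ (lam n x)]
  simp only [lam]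
  rw [← sum_div, ← mul_sum, factorial_mul_sum_vand_Ico hx.monotone, div_self (vand_pos hx).ne']
end

section
/- For x^n ∈ ℝ^n with x^n_1 < ... < x^n_n, the (n(n−1)/2)-dimensional Lebesgue volume of the set K(x^n) of tuples (x^1, ..., x^{n−1}) with x^k ∈ ℝ^k satisfying x^{k+1}_i ≤ x^k_i ≤ x^{k+1}_{i+1} for all applicable i, k, equals h_n(x^n) / Π_{k=1}^{n−1} k!, where h_n(x) = Π_{i<j}(x_j − x_i). -/
open Matrix MeasureTheory

/-- Vandermonde product `h_n(z) = Π_{i<j}(z_j - z_i)` (real arguments). -/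
noncomputable def vandR (n : ℕ) (z : Fin n → ℝ) : ℝ :=
  ∏ i : Fin n, ∏ j ∈ Finset.Ioi i, (z j - z i)

/-- Full row `j` (for `j ≤ m`) of an interlacing array with prescribed top row:
rows `j < m` come from `X` and row `m` is `top`.  Row `j` represents `x^{j+1}`. -/
def GTrow {α : Type*} (m : ℕ) (top : Fin (m+1) → α)
    (X : (k : Fin m) → Fin ((k : ℕ)+1) → α) (j : ℕ) (hj : j < m + 1) :
    Fin (j+1) → α :=
  if h : j < m then X ⟨j, h⟩ else fun i => top (Fin.cast (by omega) i)

/-- The continuous Gelfand–Tsetlin polytope `K(x^n)` with top row `top` (weak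
interlacing `x^{k+1}_i ≤ x^k_i ≤ x^{k+1}_{i+1}`), `n = m+1`. -/
def GTpolytope (m : ℕ) (top : Fin (m+1) → ℝ) :
    Set ((k : Fin m) → Fin ((k : ℕ)+1) → ℝ) :=
  {X | ∀ (k : ℕ) (hk : k < m) (i : Fin (k+1)),
      GTrow m top X (k+1) (by omega) i.castSucc ≤ GTrow m top X k (by omega) i ∧
      GTrow m top X k (by omega) i ≤ GTrow m top X (k+1) (by omega) i.succ}

/-!
Keeping only the row `x^n`, the polytope `K(x^{n+1})` fibres over the box
`∏ⱼ [x^{n+1}_j, x^{n+1}_{j+1}]` of rows interlacing with `x^{n+1}`, with fibre `K(x^n)`. Every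
point of that box is itself monotone, so by induction over monotone top rows the volume is
`∫_box h_n / ∏_{k<n} k!`. Expanding `h_n` as a Vandermonde determinant and integrating column by
column, the box integral is the determinant of `((x_{j+1}^{i+1} - x_j^{i+1}) / (i+1))`, that is
`h_{n+1}(x) / n!`.
-/

open Set

theorem vandR_eq_det (n : ℕ) (y : Fin n → ℝ) :
    vandR n y = (of fun i j : Fin n => y j ^ (i : ℕ)).det := by
  rw [show (of fun i j : Fin n => y j ^ (i : ℕ)) = (vandermonde y)ᵀ from rfl, det_transpose,
    det_vandermonde, vandR]

theorem vandR_succ_eq_det_sub (n : ℕ) (y : Fin (n + 1) → ℝ) :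
    vandR (n + 1) y =
      (of fun i j : Fin n => y j.succ ^ ((i : ℕ) + 1) - y j.castSucc ^ ((i : ℕ) + 1)).det := by
  set B : Matrix (Fin (n + 1)) (Fin (n + 1)) ℝ :=
    of fun i => Fin.cases (y 0 ^ (i : ℕ)) fun j => y j.succ ^ (i : ℕ) - y j.castSucc ^ (i : ℕ)
  have hcols : (of fun i j : Fin (n + 1) => y j ^ (i : ℕ)).det = B.det :=
    det_eq_of_forall_col_eq_smul_add_pred (fun _ => 1) (fun _ => rfl) (fun i j => by simp [B])
  rw [vandR_eq_det, hcols, det_succ_row_zero, Fin.sum_univ_succ]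
  simp [B, submatrix]

theorem vandR_nonneg_of_monotone {n : ℕ} {y : Fin n → ℝ} (hy : Monotone y) :
    0 ≤ vandR n y :=
  Finset.prod_nonneg fun _ _ => Finset.prod_nonneg fun _ hj =>
    sub_nonneg.2 (hy (Finset.mem_Ioi.1 hj).le)

theorem continuous_vandR (n : ℕ) : Continuous (vandR n) := by
  unfold vandR
  fun_prop

theorem setIntegral_univ_pi_det {ι : Type*} [Fintype ι] [DecidableEq ι] {s : ι → Set ℝ}
    {f : ι → ℝ → ℝ} (hf : ∀ i j, IntegrableOn (f i) (s j)) :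
    ∫ y in univ.pi s, (of fun i j => f i (y j)).det =
      (of fun i j => ∫ t in s j, f i t).det := by
  simp only [det_apply', of_apply]
  rw [volume_pi, Measure.restrict_pi_pi, integral_finsetSum]
  · refine Finset.sum_congr rfl fun σ _ => ?_
    rw [integral_const_mul, integral_fintype_prod_eq_prod]
  · exact fun σ _ => (Integrable.fintype_prod_dep fun j => hf (σ j) j).const_mul _

def interlacingBox {n : ℕ} (x : Fin (n + 1) → ℝ) : Set (Fin n → ℝ) :=
  univ.pi fun j => Icc (x j.castSucc) (x j.succ)

theorem measurableSet_interlacingBox {n : ℕ} (x : Fin (n + 1) → ℝ) :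
    MeasurableSet (interlacingBox x) :=
  .univ_pi fun _ => measurableSet_Icc

theorem monotone_of_mem_interlacingBox {n : ℕ} {x : Fin (n + 2) → ℝ} {y : Fin (n + 1) → ℝ}
    (hy : y ∈ interlacingBox x) : Monotone y :=
  Fin.monotone_iff_le_succ.2 fun i => calc
    y i.castSucc ≤ x i.castSucc.succ := (hy i.castSucc trivial).2
    _ = x i.succ.castSucc := rfl
    _ ≤ y i.succ := (hy i.succ trivial).1

theorem integral_vandR_interlacingBox {n : ℕ} {x : Fin (n + 1) → ℝ} (hx : Monotone x) :
    ∫ y in interlacingBox x, vandR n y = vandR (n + 1) x / n.factorial := by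
  have hle : ∀ j : Fin n, x j.castSucc ≤ x j.succ := fun j => hx (Fin.castSucc_le_succ j)
  simp_rw [interlacingBox, vandR_eq_det n]
  rw [setIntegral_univ_pi_det fun (i : Fin n) _ => (continuous_pow (i : ℕ)).integrableOn_Icc]
  set A : Matrix (Fin n) (Fin n) ℝ :=
    of fun i j => x j.succ ^ ((i : ℕ) + 1) - x j.castSucc ^ ((i : ℕ) + 1) with hA
  have hcol : (of fun (i j : Fin n) => ∫ t in Icc (x j.castSucc) (x j.succ), t ^ (i : ℕ)) =
      of fun (i j : Fin n) => (((i : ℕ) : ℝ) + 1)⁻¹ * A i j := by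
    ext i j
    rw [of_apply, integral_Icc_eq_integral_Ioc, ← intervalIntegral.integral_of_le (hle j),
      integral_pow]
    simp [hA, div_eq_inv_mul]
  rw [hcol, det_mul_column, hA, ← vandR_succ_eq_det_sub, Finset.prod_inv_distrib,
    Fin.prod_univ_eq_prod_range (fun i => (i : ℝ) + 1), inv_mul_eq_div,
    ← Finset.prod_range_add_one_eq_factorial]
  push_cast
  rfl

theorem measurePreserving_piFinLastInit {n : ℕ} {α : Fin (n + 1) → Type*}
    [∀ i, MeasurableSpace (α i)] (μ : ∀ i, Measure (α i)) [∀ i, SigmaFinite (μ i)] :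
    MeasurePreserving (fun x : ∀ i, α i => (x (Fin.last n), fun j : Fin n => x j.castSucc))
      (Measure.pi μ) ((μ (Fin.last n)).prod (Measure.pi fun j : Fin n => μ j.castSucc)) := by
  -- `(Fin.last n).succAbove` is only propositionally equal to `Fin.castSucc`
  suffices ∀ e : Fin n → Fin (n + 1), e = (Fin.last n).succAbove →
      MeasurePreserving (fun x : ∀ i, α i => (x (Fin.last n), fun j : Fin n => x (e j)))
        (Measure.pi μ) ((μ (Fin.last n)).prod (Measure.pi fun j => μ (e j))) from
    this _ Fin.succAbove_last.symm
  rintro _ rfl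
  exact measurePreserving_piFinSuccAbove μ (Fin.last n)

def GTinit {m : ℕ} (X : (k : Fin (m + 1)) → Fin ((k : ℕ) + 1) → ℝ) :
    (k : Fin m) → Fin ((k : ℕ) + 1) → ℝ :=
  fun k => X k.castSucc

theorem GTrow_GTinit {m : ℕ} (top : Fin (m + 2) → ℝ)
    (X : (k : Fin (m + 1)) → Fin ((k : ℕ) + 1) → ℝ) (k : ℕ) (hk : k < m + 1) :
    GTrow m (X (Fin.last m)) (GTinit X) k hk = GTrow (m + 1) top X k (by omega) := by
  unfold GTrow
  by_cases h : k < m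
  · rw [dif_pos h, dif_pos (by omega)]
    rfl
  · obtain rfl : k = m := by omega
    rw [dif_neg h, dif_pos (by omega)]
    rfl

theorem mem_GTpolytope_succ_iff {m : ℕ} (top : Fin (m + 2) → ℝ)
    (X : (k : Fin (m + 1)) → Fin ((k : ℕ) + 1) → ℝ) :
    X ∈ GTpolytope (m + 1) top ↔
      X (Fin.last m) ∈ interlacingBox top ∧ GTinit X ∈ GTpolytope m (X (Fin.last m)) := by
  have htop : GTrow (m + 1) top X (m + 1) (by omega) = top := by
    simp [GTrow]
  have hlast : GTrow (m + 1) top X m (by omega) = X (Fin.last m) := by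
    simp [GTrow]
    rfl
  constructor
  · intro hX
    refine ⟨fun i _ => ?_, fun k hk i => ?_⟩
    · simpa only [htop, hlast, mem_Icc] using hX m (by omega) i
    · rw [GTrow_GTinit top, GTrow_GTinit top]
      exact hX k (by omega) i
  · rintro ⟨hbox, hinit⟩ k hk i
    obtain hk | rfl : k < m ∨ k = m := by omega
    · simpa only [GTrow_GTinit top] using hinit k hk i
    · rw [htop, hlast]
      exact hbox i trivial

theorem measurable_GTrow (m j : ℕ) (hj : j < m + 1) (i : Fin (j + 1)) :
    Measurable fun p : (Fin (m + 1) → ℝ) × ((k : Fin m) → Fin ((k : ℕ) + 1) → ℝ) =>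
      GTrow m p.1 p.2 j hj i := by
  unfold GTrow
  split_ifs with h
  · exact (measurable_pi_apply i).comp
      ((measurable_pi_apply (⟨j, h⟩ : Fin m)).comp measurable_snd)
  · exact (measurable_pi_apply _).comp measurable_fst

theorem measurableSet_setOf_mem_GTpolytope (m : ℕ) :
    MeasurableSet {p : (Fin (m + 1) → ℝ) × ((k : Fin m) → Fin ((k : ℕ) + 1) → ℝ) |
      p.2 ∈ GTpolytope m p.1} := by
  simp only [GTpolytope, mem_ofPred_eq]
  simp only [ofPred_forall, ofPred_and]
  exact .iInter fun k => .iInter fun (_ : k < m) => .iInter fun (i : Fin (k + 1)) =>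
    (measurableSet_le (measurable_GTrow ..) (measurable_GTrow ..)).inter
      (measurableSet_le (measurable_GTrow ..) (measurable_GTrow ..))

theorem volume_GTpolytope_succ {m : ℕ} (top : Fin (m + 2) → ℝ) :
    volume (GTpolytope (m + 1) top) = ∫⁻ y in interlacingBox top, volume (GTpolytope m y) := by
  set S := {p : (Fin (m + 1) → ℝ) × ((k : Fin m) → Fin ((k : ℕ) + 1) → ℝ) |
    p.1 ∈ interlacingBox top ∧ p.2 ∈ GTpolytope m p.1}
  have hbox := measurableSet_interlacingBox top
  have hS : MeasurableSet S :=
    (measurable_fst hbox).inter (measurableSet_setOf_mem_GTpolytope m)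
  have hpre : GTpolytope (m + 1) top = (fun X => (X (Fin.last m), GTinit X)) ⁻¹' S := by
    ext X
    exact mem_GTpolytope_succ_iff top X
  have hsplit : MeasurePreserving (fun X => (X (Fin.last m), GTinit X)) volume
      (volume.prod volume) :=
    measurePreserving_piFinLastInit fun _ => volume
  rw [hpre, hsplit.measure_preimage hS.nullMeasurableSet, Measure.prod_apply hS,
    ← lintegral_indicator hbox]
  congr 1 with y
  by_cases hy : y ∈ interlacingBox top <;> simp [S, hy]

theorem volume_GTpolytope_of_monotone : ∀ (m : ℕ) {top : Fin (m + 1) → ℝ}, Monotone top →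
    volume (GTpolytope m top) =
      ENNReal.ofReal (vandR (m + 1) top / ∏ k ∈ Finset.range (m + 1), (k.factorial : ℝ))
  | 0, top, _ => by
    simp [GTpolytope, vandR, volume_pi]
  | m + 1, top, htop => by
    set c := ∏ k ∈ Finset.range (m + 1), (k.factorial : ℝ)
    have hbox := measurableSet_interlacingBox top
    have hint : IntegrableOn (fun y => vandR (m + 1) y / c) (interlacingBox top) :=
      ((continuous_vandR _).div_const _).continuousOn.integrableOn_compact
        (isCompact_univ_pi fun _ => isCompact_Icc)
    have hnonneg : ∀ᵐ y ∂volume.restrict (interlacingBox top), 0 ≤ vandR (m + 1) y / c :=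
      (ae_restrict_iff' hbox).2 (.of_forall fun y hy =>
        div_nonneg (vandR_nonneg_of_monotone (monotone_of_mem_interlacingBox hy)) (by positivity))
    rw [volume_GTpolytope_succ, setLIntegral_congr_fun hbox fun y hy =>
        volume_GTpolytope_of_monotone m (monotone_of_mem_interlacingBox hy),
      ← ofReal_integral_eq_lintegral_ofReal hint hnonneg, integral_div,
      integral_vandR_interlacingBox htop, Finset.prod_range_succ _ (m + 1), div_div, mul_comm]

/-- the Lebesgue volume of the Gelfand–Tsetlin polytope with top row
`x^n` is `h_n(x^n)/Π_{k<n} k!` (here `n = m+1`). -/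
theorem volume_GTpolytope (m : ℕ) (top : Fin (m+1) → ℝ) (htop : StrictMono top) :
    volume (GTpolytope m top)
      = ENNReal.ofReal (vandR (m+1) top / ∏ k ∈ Finset.range (m+1), (k.factorial : ℝ)) :=
  volume_GTpolytope_of_monotone m htop.monotone
end

section
/- Fix n ≥ 1 and t ∈ ℕ. Define the (2n+1)×(2n+1) block matrix M((x,y),(x',y')) with blocks A, B, C, D as follows: A is (n+1)×(n+1) with entries φ^{(t)}(x'_i − x_j); B is (n+1)×n with entries Δ^{−1}φ^{(t)}(y'_i − x_j) − 1{j ≥ i}; C is n×(n+1) with entries Δφ^{(t)}(y'_i − x_j); D is n×n with entries φ^{(t)}(y'_i − y_j), where φ = (1/2)(δ_0 + δ_1), Δ^{−1}f(x) = Σ_{z ≤ x} f(z), Δf(x) = f(x) − f(x−1). Let q_t((x,y),(x',y')) = det M. Then for t = 0 and any f : W^{n+1,n} → ℝ, Σ_{(x',y') ∈ W^{n+1,n}} q_0((x,y),(x',y')) f(x',y') = f(x,y); i.e., q_0((x,y),·) = δ_{(x,y)} on W^{n+1,n}. -/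
open Matrix BigOperators

/-! At `t = 0` every entry of the kernel matrix is a `0`/`±1` indicator. For `(x', y') = (x, y)`
interlacing makes the upper-right block vanish and the diagonal blocks identities. Otherwise take
the first index, in the interleaved order `x₀, y₀, x₁, y₁, …`, at which the two configurations
differ: interlacing of both forces there either a zero row or column, or a row (column) supported
in a single entry whose partner row (column) is the corresponding unit vector, so the determinant
vanishes. -/

theorem Dinv_deltaK (a v : ℤ) : Dinv (deltaK a) v = if a ≤ v then 1 else 0 := by
  refine (tsum_subtype {z : ℤ | z ≤ v} (deltaK a)).trans ?_
  rw [tsum_eq_single a fun z hz => by simp [deltaK, hz]]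
  simp [deltaK, Set.indicator]

theorem Dd_deltaK (a v : ℤ) : Dd (deltaK a) v = deltaK a v - deltaK (a + 1) v := by
  simp only [Dd, deltaK, sub_eq_iff_eq_add]

theorem deltaK_sub (a u v : ℤ) : deltaK a (u - v) = if u = v + a then 1 else 0 := by
  simp only [deltaK, sub_eq_iff_eq_add']

noncomputable def qmatZero (n : ℕ) (x : Fin (n+1) → ℤ) (y : Fin n → ℤ)
    (x' : Fin (n+1) → ℤ) (y' : Fin n → ℤ) :
    Matrix (Fin (n+1) ⊕ Fin n) (Fin (n+1) ⊕ Fin n) ℝ :=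
  fromBlocks
    (of fun i j => if x' j = x i then 1 else 0)
    (of fun i j => (if x i ≤ y' j then 1 else 0) - if (i : ℕ) ≤ j then 1 else 0)
    (of fun i j => (if x' j = y i then 1 else 0) - if x' j = y i + 1 then 1 else 0)
    (of fun i j => if y' j = y i then 1 else 0)

theorem qker_zero (n : ℕ) (x : Fin (n+1) → ℤ) (y : Fin n → ℤ)
    (x' : Fin (n+1) → ℤ) (y' : Fin n → ℤ) :
    qker n 0 x y x' y' = (qmatZero n x y x' y').det := by
  unfold qker qmatZero
  congr 1
  ext (i | i) (j | j) <;>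
    simp only [phiPow, fromBlocks_apply₁₁, fromBlocks_apply₁₂, fromBlocks_apply₂₁,
      fromBlocks_apply₂₂, of_apply, Dinv_deltaK, Dd_deltaK, deltaK_sub, sub_nonneg, add_zero,
      zero_add]

namespace Matrix

variable {m R : Type*} [Fintype m] [DecidableEq m] [CommRing R]

theorem det_eq_zero_of_col_supported_of_col_eq_single {M : Matrix m m R} {j j' r : m}
    (hjj' : j ≠ j') (hj : ∀ i, i ≠ r → M i j = 0)
    (hj' : ∀ i, M i j' = (Pi.single r 1 : m → R) i) :
    M.det = 0 := by
  have hM : M = M.updateCol j (M r j • fun i => M i j') := by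
    ext i k
    by_cases hk : k = j
    · subst hk
      by_cases hi : i = r
      · simp [hi, hj']
      · simp [hi, hj', hj i hi]
    · simp [hk]
  rw [hM, det_updateCol_smul, det_zero_of_column_eq hjj' fun i => by simp [hjj'.symm], mul_zero]

theorem det_eq_zero_of_row_supported_of_row_eq_single {M : Matrix m m R} {i i' c : m}
    (hii' : i ≠ i') (hi : ∀ j, j ≠ c → M i j = 0)
    (hi' : ∀ j, M i' j = (Pi.single c 1 : m → R) j) :
    M.det = 0 := by
  rw [← det_transpose]
  exact det_eq_zero_of_col_supported_of_col_eq_single hii' hi hi'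

end Matrix

namespace interlace

variable {n : ℕ} {x : Fin (n+1) → ℤ} {y : Fin n → ℤ}

theorem strictMono_left (h : interlace n x y) : StrictMono x :=
  Fin.strictMono_iff_lt_succ.2 fun i => (h i).1.trans_lt (h i).2

theorem left_lt_left (h : interlace n x y) {i j : Fin (n+1)} (hij : (i : ℕ) < j) : x i < x j :=
  h.strictMono_left hij

theorem left_le_left (h : interlace n x y) {i j : Fin (n+1)} (hij : (i : ℕ) ≤ j) : x i ≤ x j :=
  h.strictMono_left.monotone hij

theorem left_le_right (h : interlace n x y) {i : Fin (n+1)} {j : Fin n} (hij : (i : ℕ) ≤ j) :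
    x i ≤ y j :=
  (h.left_le_left (j := j.castSucc) hij).trans (h j).1

theorem right_lt_left (h : interlace n x y) {i : Fin (n+1)} {j : Fin n} (hij : (j : ℕ) < i) :
    y j < x i :=
  (h j).2.trans_le (h.left_le_left (i := j.succ) hij)

theorem strictMono_right (h : interlace n x y) : StrictMono y := fun i j hij =>
  (h.right_lt_left (i := i.succ) (by simp)).trans_le (h.left_le_right (i := i.succ) hij)

theorem right_lt_right (h : interlace n x y) {i j : Fin n} (hij : (i : ℕ) < j) : y i < y j :=
  h.strictMono_right hij

end interlace

section

variable {n : ℕ} {x x' : Fin (n+1) → ℤ} {y y' : Fin n → ℤ}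

@[simp] theorem qmatZero_inl_inl (i j : Fin (n+1)) :
    qmatZero n x y x' y' (.inl i) (.inl j) = if x' j = x i then 1 else 0 := rfl

@[simp] theorem qmatZero_inl_inr (i : Fin (n+1)) (j : Fin n) :
    qmatZero n x y x' y' (.inl i) (.inr j) =
      (if x i ≤ y' j then 1 else 0) - if (i : ℕ) ≤ j then 1 else 0 := rfl

@[simp] theorem qmatZero_inr_inl (i : Fin n) (j : Fin (n+1)) :
    qmatZero n x y x' y' (.inr i) (.inl j) =
      (if x' j = y i then 1 else 0) - if x' j = y i + 1 then 1 else 0 := rfl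

@[simp] theorem qmatZero_inr_inr (i j : Fin n) :
    qmatZero n x y x' y' (.inr i) (.inr j) = if y' j = y i then 1 else 0 := rfl

theorem det_qmatZero_eq_zero_of_left_lt (h : interlace n x y) (h' : interlace n x' y')
    {k : Fin (n+1)} (hk : x k < x' k) (hx : ∀ i : Fin (n+1), (i : ℕ) < k → x' i = x i)
    (hy : ∀ j : Fin n, (j : ℕ) < k → y' j = y j) :
    (qmatZero n x y x' y').det = 0 := by
  refine det_eq_zero_of_row_eq_zero (.inl k) ?_
  rintro (j | j) <;> rcases lt_or_ge (j : ℕ) k with hjk | hjk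
  · have := hx j hjk
    have := h.left_lt_left hjk
    rw [qmatZero_inl_inl, if_neg (by omega)]
  · have := h'.left_le_left hjk
    rw [qmatZero_inl_inl, if_neg (by omega)]
  · have := hy j hjk
    have := h.right_lt_left hjk
    rw [qmatZero_inl_inr, if_neg (by omega), if_neg (by omega), sub_self]
  · have := h'.left_le_right hjk
    rw [qmatZero_inl_inr, if_pos (by omega), if_pos hjk, sub_self]

theorem det_qmatZero_eq_zero_of_left_gt (h : interlace n x y) (h' : interlace n x' y')
    {k : Fin (n+1)} (hk : x' k < x k) (hx : ∀ i : Fin (n+1), (i : ℕ) < k → x' i = x i)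
    (hy : ∀ j : Fin n, (j : ℕ) < k → y' j = y j) :
    (qmatZero n x y x' y').det = 0 := by
  -- Column `x'ₖ` can be nonzero only in row `yₖ₋₁` (if `yₖ₋₁ + 1 = x'ₖ`), and column `y'ₖ₋₁`
  -- is the unit vector at that row.
  have hcol : ∀ r, (∀ j : Fin n, (j : ℕ) + 1 = k → r ≠ .inr j) →
      qmatZero n x y x' y' r (.inl k) = 0 := by
    rintro (i | i) hi <;> rcases lt_or_ge (i : ℕ) k with hik | hik
    · have := hx i hik
      have := h'.left_lt_left hik
      rw [qmatZero_inl_inl, if_neg (by omega)]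
    · have := h.left_le_left hik
      rw [qmatZero_inl_inl, if_neg (by omega)]
    · have hik' : (i.succ : ℕ) < k := lt_of_le_of_ne hik fun e => hi i e rfl
      have := hy i hik
      have := h'.right_lt_left (i := i.succ) (j := i) (by simp)
      have := h'.left_lt_left hik'
      rw [qmatZero_inr_inl, if_neg (by omega), if_neg (by omega), sub_self]
    · have := h.left_le_right hik
      rw [qmatZero_inr_inl, if_neg (by omega), if_neg (by omega), sub_self]
  rcases Fin.eq_zero_or_eq_succ k with rfl | ⟨j, rfl⟩
  · exact det_eq_zero_of_column_eq_zero _ fun r => hcol r fun j hj => by simp at hj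
  refine det_eq_zero_of_col_supported_of_col_eq_single (j' := .inr j) (r := .inr j)
    Sum.inl_ne_inr (fun r hr => hcol r fun j' hj' => ?_) ?_
  · rwa [show j' = j from Fin.ext (by simpa using hj')]
  rintro (i | i)
  · rcases le_or_gt (i : ℕ) j with hij | hij
    · have := hx i (by simpa using Nat.lt_succ_of_le hij)
      have := h'.left_le_right hij
      rw [qmatZero_inl_inr, if_pos (by omega), if_pos hij, sub_self, Pi.single_apply,
        if_neg (by simp)]
    · have := h.left_le_left (i := j.succ) (j := i) (by simpa using hij)
      have := h'.right_lt_left (i := j.succ) (j := j) (by simp)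
      rw [qmatZero_inl_inr, if_neg (by omega), if_neg (by omega), sub_self, Pi.single_apply,
        if_neg (by simp)]
  · rw [qmatZero_inr_inr, hy j (by simp)]
    simp [Pi.single_apply, h.strictMono_right.injective.eq_iff, eq_comm]

theorem det_qmatZero_eq_zero_of_right_lt (h : interlace n x y) (h' : interlace n x' y')
    {k : Fin n} (hk : y' k < y k) (hx : ∀ i : Fin (n+1), (i : ℕ) ≤ k → x' i = x i)
    (hy : ∀ j : Fin n, (j : ℕ) < k → y' j = y j) :
    (qmatZero n x y x' y').det = 0 := by
  refine det_eq_zero_of_column_eq_zero (.inr k) ?_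
  rintro (i | i)
  · rcases le_or_gt (i : ℕ) k with hik | hik
    · have := hx i hik
      have := h'.left_le_right hik
      rw [qmatZero_inl_inr, if_pos (by omega), if_pos hik, sub_self]
    · have := h.right_lt_left hik
      rw [qmatZero_inl_inr, if_neg (by omega), if_neg (by omega), sub_self]
  · rcases lt_or_ge (i : ℕ) k with hik | hik
    · have := hy i hik
      have := h'.right_lt_right hik
      rw [qmatZero_inr_inr, if_neg (by omega)]
    · have := h.strictMono_right.monotone (show k ≤ i from hik)
      rw [qmatZero_inr_inr, if_neg (by omega)]

theorem det_qmatZero_eq_zero_of_right_gt (h : interlace n x y) (h' : interlace n x' y')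
    {k : Fin n} (hk : y k < y' k) (hx : ∀ i : Fin (n+1), (i : ℕ) ≤ k → x' i = x i)
    (hy : ∀ j : Fin n, (j : ℕ) < k → y' j = y j) :
    (qmatZero n x y x' y').det = 0 := by
  -- Row `yₖ` can be nonzero only in column `x'ₖ`, and row `xₖ` is the unit vector at that column.
  refine det_eq_zero_of_row_supported_of_row_eq_single (i := .inr k) (i' := .inl k.castSucc)
    (c := .inl k.castSucc) Sum.inr_ne_inl ?_ ?_
  · rintro (j | j) hj
    · have hjk : (j : ℕ) ≠ k := fun e => hj (congrArg _ (Fin.ext (by simpa using e)))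
      rcases lt_or_gt_of_ne hjk with hjk | hjk
      · have := hx j hjk.le
        have := h.left_lt_left (i := j) (j := k.castSucc) (by simpa using hjk)
        have := (h k).1
        rw [qmatZero_inr_inl, if_neg (by omega), if_neg (by omega), sub_self]
      · have := h'.right_lt_left hjk
        rw [qmatZero_inr_inl, if_neg (by omega), if_neg (by omega), sub_self]
    · rcases lt_or_ge (j : ℕ) k with hjk | hjk
      · have := hy j hjk
        have := h.right_lt_right hjk
        rw [qmatZero_inr_inr, if_neg (by omega)]
      · have := h'.strictMono_right.monotone (show k ≤ j from hjk)
        rw [qmatZero_inr_inr, if_neg (by omega)]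
  · have hxk := hx k.castSucc (by simp)
    rintro (j | j)
    · rw [qmatZero_inl_inl, ← hxk]
      simp [Pi.single_apply, h'.strictMono_left.injective.eq_iff]
    · rcases lt_or_ge (j : ℕ) k with hjk | hjk
      · have := hy j hjk
        have := h.right_lt_left (i := k.castSucc) (j := j) (by simpa using hjk)
        rw [qmatZero_inl_inr, if_neg (by omega), if_neg (by simpa using hjk), sub_self,
          Pi.single_apply, if_neg (by simp)]
      · have := h'.left_le_right (i := k.castSucc) (j := j) (by simpa using hjk)
        rw [qmatZero_inl_inr, if_pos (by omega), if_pos (by simpa using hjk), sub_self,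
          Pi.single_apply, if_neg (by simp)]

theorem det_qmatZero_self (h : interlace n x y) : (qmatZero n x y x y).det = 1 := by
  have hA : (of fun i j : Fin (n+1) => if x j = x i then (1 : ℝ) else 0) = 1 := by
    ext i j
    simp [one_apply, h.strictMono_left.injective.eq_iff, eq_comm]
  have hB : (of fun (i : Fin (n+1)) (j : Fin n) =>
      (if x i ≤ y j then (1 : ℝ) else 0) - if (i : ℕ) ≤ j then 1 else 0) = 0 := by
    ext i j
    rcases le_or_gt (i : ℕ) j with hij | hij
    · rw [of_apply, if_pos (h.left_le_right hij), if_pos hij, sub_self, Matrix.zero_apply]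
    · rw [of_apply, if_neg (h.right_lt_left hij).not_ge, if_neg hij.not_ge, sub_self,
        Matrix.zero_apply]
  have hD : (of fun i j : Fin n => if y j = y i then (1 : ℝ) else 0) = 1 := by
    ext i j
    simp [one_apply, h.strictMono_right.injective.eq_iff, eq_comm]
  rw [qmatZero, hA, hB, hD, det_fromBlocks_zero₁₂, det_one, det_one, mul_one]

theorem exists_first_ne_interleaved (hne : (x', y') ≠ (x, y)) :
    (∃ k, x' k ≠ x k ∧ (∀ i : Fin (n+1), (i : ℕ) < k → x' i = x i) ∧
      ∀ j : Fin n, (j : ℕ) < k → y' j = y j) ∨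
    (∃ k, y' k ≠ y k ∧ (∀ i : Fin (n+1), (i : ℕ) ≤ k → x' i = x i) ∧
      ∀ j : Fin n, (j : ℕ) < k → y' j = y j) := by
  -- position in the interleaved order `x₀, y₀, x₁, y₁, …`
  let pos : Fin (n+1) ⊕ Fin n → ℕ := Sum.elim (fun i => 2 * i) fun j => 2 * j + 1
  let D := Finset.univ.filter fun s => Sum.elim x' y' s ≠ Sum.elim x y s
  have hD : D.Nonempty := by
    rw [Ne, Prod.ext_iff, not_and_or] at hne
    rcases hne with hx | hy
    · obtain ⟨i, hi⟩ := Function.ne_iff.1 hx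
      exact ⟨.inl i, by simpa [D] using hi⟩
    · obtain ⟨j, hj⟩ := Function.ne_iff.1 hy
      exact ⟨.inr j, by simpa [D] using hj⟩
  obtain ⟨s, hs, hmin⟩ := D.exists_min_image pos hD
  have agree : ∀ s', pos s' < pos s → Sum.elim x' y' s' = Sum.elim x y s' := fun s' hlt => by
    by_contra hne'
    exact (hmin s' (by simpa [D] using hne')).not_gt hlt
  rcases s with k | k
  · exact .inl ⟨k, by simpa [D] using hs, fun i hi => agree (.inl i) (by simp [pos]; omega),
      fun j hj => agree (.inr j) (by simp [pos]; omega)⟩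
  · exact .inr ⟨k, by simpa [D] using hs, fun i hi => agree (.inl i) (by simp [pos]; omega),
      fun j hj => agree (.inr j) (by simp [pos]; omega)⟩

theorem det_qmatZero (h : interlace n x y) (h' : interlace n x' y') :
    (qmatZero n x y x' y').det = if (x', y') = (x, y) then 1 else 0 := by
  split_ifs with heq
  · obtain ⟨rfl, rfl⟩ := Prod.ext_iff.1 heq
    exact det_qmatZero_self h
  rcases exists_first_ne_interleaved heq with ⟨k, hk, hx, hy⟩ | ⟨k, hk, hx, hy⟩
  · rcases hk.lt_or_gt with hlt | hlt
    · exact det_qmatZero_eq_zero_of_left_gt h h' hlt hx hy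
    · exact det_qmatZero_eq_zero_of_left_lt h h' hlt hx hy
  · rcases hk.lt_or_gt with hlt | hlt
    · exact det_qmatZero_eq_zero_of_right_lt h h' hlt hx hy
    · exact det_qmatZero_eq_zero_of_right_gt h h' hlt hx hy

end

/-- `q_0^n((x,y),·)` acts as the Dirac delta at `(x,y)` on `W^{n+1,n}`. -/
theorem qker_zero_is_delta (n : ℕ) (x : Fin (n+1) → ℤ) (y : Fin n → ℤ)
    (hxy : interlace n x y)
    (f : {p : (Fin (n+1) → ℤ) × (Fin n → ℤ) // interlace n p.1 p.2} → ℝ) :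
    ∑' p : {p : (Fin (n+1) → ℤ) × (Fin n → ℤ) // interlace n p.1 p.2},
        qker n 0 x y p.1.1 p.1.2 * f p = f ⟨(x, y), hxy⟩ := by
  have hq : ∀ p : {p : (Fin (n+1) → ℤ) × (Fin n → ℤ) // interlace n p.1 p.2},
      qker n 0 x y p.1.1 p.1.2 = if p = ⟨(x, y), hxy⟩ then 1 else 0 := fun p => by
    rw [qker_zero, det_qmatZero hxy p.2]
    simp [Subtype.ext_iff]
  rw [tsum_eq_single ⟨(x, y), hxy⟩ fun p hp => by rw [hq, if_neg hp, zero_mul], hq, if_pos rfl,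
    one_mul]
end

section
/- With q_t^n the determinantal kernel as above, if x_i = y_i for some i, then the forward difference in x_i vanishes: ∇̄_{x_i} q_t^n((x,y),(x',y')) = 0, where ∇̄_{x_i} f(x,y) = f(x with x_i replaced by x_i+1, y) − f(x,y). Similarly, if x_{i+1} = y_i then ∇̄_{x_{i+1}} q_t^n((x,y),(x',y')) = 0. -/
/-!
Raising `x_k` by one shifts every argument in the `x_k`-row of the matrix down by one, and
`φ(z - 1) = φ(z) - Δφ(z)`, `Δ⁻¹φ(z - 1) = Δ⁻¹φ(z) - φ(z)`; the indicator part of `B` does not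
involve `x`. So when `x_k = y_i` the shifted row is the old `x_k`-row minus the `y_i`-row, and
subtracting one row from another leaves the determinant unchanged.
-/

open Matrix BigOperators

lemma conv_phiB (f : ℤ → ℝ) (x : ℤ) : conv f phiB x = (f x + f (x - 1)) / 2 := by
  have hsupp : ∀ s ∉ ({x - 1, x} : Finset ℤ), f s * phiB (x - s) = 0 := by
    intro s hs
    simp only [Finset.mem_insert, Finset.mem_singleton, not_or] at hs
    simp [phiB, deltaK, sub_eq_zero, Ne.symm hs.2, show x - s ≠ 1 by omega]
  rw [conv, tsum_eq_sum hsupp, Finset.sum_pair (by omega)]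
  simp only [phiB, deltaK, sub_sub_cancel, sub_self, one_ne_zero, zero_ne_one, ↓reduceIte,
    zero_add, add_zero]
  ring

lemma phiPow_support_subset (t : ℕ) : Function.support (phiPow t) ⊆ Set.Icc 0 (t : ℤ) := by
  induction t with
  | zero => intro x hx; simp_all [phiPow, deltaK]
  | succ t ih =>
    intro x hx
    rw [Function.mem_support, phiPow, conv_phiB] at hx
    have hx' : phiPow t x ≠ 0 ∨ phiPow t (x - 1) ≠ 0 := by
      contrapose! hx
      simp [hx]
    rw [Set.mem_Icc]
    push_cast
    rcases hx' with h | h <;> have := ih h <;> rw [Set.mem_Icc] at this <;> omega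

lemma summable_phiPow (t : ℕ) : Summable (phiPow t) :=
  summable_of_hasFiniteSupport ((Set.finite_Icc _ _).subset (phiPow_support_subset t))

lemma Dinv_sub_one {f : ℤ → ℝ} (hf : Summable f) (x : ℤ) :
    Dinv f (x - 1) = Dinv f x - f x := by
  have hind : ∀ a, Dinv f a = ∑' z, (Set.Iic a).indicator f z :=
    fun a => tsum_subtype (Set.Iic a) f
  have hsplit : (Set.Iic x).indicator f = (Set.Iic (x - 1)).indicator f + Pi.single x (f x) := by
    ext z
    rcases lt_trichotomy z x with h | rfl | h
    · simp [Set.indicator, h.ne, Int.le_sub_one_iff.2 h, h.le]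
    · simp [Set.indicator]
    · simp [Set.indicator, h.ne', not_le.2 h, show ¬ z ≤ x - 1 by omega]
  rw [hind, hind, hsplit]
  simp only [Pi.add_apply]
  rw [((hf.indicator _).hasSum.add (hasSum_pi_single x (f x))).tsum_eq]
  ring

noncomputable def qmat (n t : ℕ) (x : Fin (n+1) → ℤ) (y : Fin n → ℤ)
    (x' : Fin (n+1) → ℤ) (y' : Fin n → ℤ) :
    Matrix (Fin (n+1) ⊕ Fin n) (Fin (n+1) ⊕ Fin n) ℝ :=
  Matrix.fromBlocks
    (Matrix.of fun i j : Fin (n+1) => phiPow t (x' j - x i))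
    (Matrix.of fun (i : Fin (n+1)) (j : Fin n) =>
      Dinv (phiPow t) (y' j - x i) - if (i : ℕ) ≤ (j : ℕ) then 1 else 0)
    (Matrix.of fun (i : Fin n) (j : Fin (n+1)) => Dd (phiPow t) (x' j - y i))
    (Matrix.of fun i j : Fin n => phiPow t (y' j - y i))

lemma qker_eq_det_qmat (n t : ℕ) (x : Fin (n+1) → ℤ) (y : Fin n → ℤ)
    (x' : Fin (n+1) → ℤ) (y' : Fin n → ℤ) :
    qker n t x y x' y' = (qmat n t x y x' y').det := rfl

lemma qmat_update_eq_updateRow (n t : ℕ) (x x' : Fin (n+1) → ℤ) (y y' : Fin n → ℤ)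
    {k : Fin (n+1)} {i : Fin n} (h : x k = y i) :
    qmat n t (Function.update x k (x k + 1)) y x' y' =
      (qmat n t x y x' y').updateRow (.inl k)
        (qmat n t x y x' y' (.inl k) + (-1 : ℝ) • qmat n t x y x' y' (.inr i)) := by
  ext (a | a) (b | b)
  · rcases eq_or_ne a k with rfl | hak
    · simp [qmat, Dd, ← h, sub_add_eq_sub_sub]
    · simp [qmat, hak]
  · rcases eq_or_ne a k with rfl | hak
    · simp only [qmat, fromBlocks_apply₁₂, fromBlocks_apply₂₂, of_apply, updateRow_self,
        Function.update_self, sub_add_eq_sub_sub, Dinv_sub_one (summable_phiPow t), ← h,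
        Pi.add_apply, Pi.neg_apply, neg_smul, one_smul]
      ring
    · simp [qmat, hak]
  · simp [qmat]
  · simp [qmat]

lemma qker_update_of_eq (n t : ℕ) (x x' : Fin (n+1) → ℤ) (y y' : Fin n → ℤ)
    {k : Fin (n+1)} {i : Fin n} (h : x k = y i) :
    qker n t (Function.update x k (x k + 1)) y x' y' = qker n t x y x' y' := by
  rw [qker_eq_det_qmat, qker_eq_det_qmat, qmat_update_eq_updateRow n t x x' y y' h,
    det_updateRow_add_smul_self _ Sum.inl_ne_inr]

/-- forward differences of `q_t^n` in the `x`-coordinates of the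
starting point vanish on the boundaries `x_i = y_i` and `x_{i+1} = y_i`. -/
theorem qker_forwardDiff_vanishes (n t : ℕ) (x x' : Fin (n+1) → ℤ)
    (y y' : Fin n → ℤ) (i : Fin n) :
    (x i.castSucc = y i →
      qker n t (Function.update x i.castSucc (x i.castSucc + 1)) y x' y'
        - qker n t x y x' y' = 0) ∧
    (x i.succ = y i →
      qker n t (Function.update x i.succ (x i.succ + 1)) y x' y'
        - qker n t x y x' y' = 0) :=
  ⟨fun h => sub_eq_zero.2 (qker_update_of_eq n t x x' y y' h),
    fun h => sub_eq_zero.2 (qker_update_of_eq n t x x' y y' h)⟩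
end

section
/- The kernel q_t^n satisfies the discrete heat-type recursion q_{t+1}^n((x,y),(x',y')) = [Π_{i=1}^{n+1}(1 + (1/2)∇̄_{x_i}) Π_{i=1}^n(1 + (1/2)∇̄_{y_i})] q_t^n((x,y),(x',y')), where ∇̄_{x_i}, ∇̄_{y_i} are forward difference operators acting on the coordinates of the starting point (x,y). -/
open Matrix BigOperators

/-!
Since `φ^{(t+1)} = φ^{(t)} * φ` and convolution with `φ` is the average
`f ↦ (f + f(· - 1)) / 2`, which commutes with `Δ` and `Δ⁻¹`, every entry of the matrix of
`q_{t+1}^n` is the average of the same entry of `q_t^n` with the starting coordinate of its row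
left alone or moved up by one. Each row of that matrix involves a single coordinate of the
starting point, so expanding the determinant multilinearly in the rows yields the average over
all `2^{2n+1}` shift patterns.
-/

noncomputable def stepAvg (f : ℤ → ℝ) (z : ℤ) : ℝ := (f z + f (z - 1)) / 2

lemma summable_stepAvg {f : ℤ → ℝ} (hf : Summable f) : Summable (stepAvg f) :=
  (hf.add (hf.comp_injective (sub_left_injective (b := 1)))).div_const 2

lemma stepAvg_sub_eq_sum_bool (f : ℤ → ℝ) (u v : ℤ) :
    stepAvg f (u - v) = 2⁻¹ * ∑ b : Bool, f (u - (v + if b then 1 else 0)) := by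
  rw [Fintype.sum_bool, if_pos rfl, if_neg Bool.false_ne_true, stepAvg, add_zero,
    sub_add_eq_sub_sub]
  ring

lemma Dd_stepAvg (f : ℤ → ℝ) : Dd (stepAvg f) = stepAvg (Dd f) := by
  ext z
  simp only [Dd, stepAvg]
  ring

lemma Dinv_stepAvg {f : ℤ → ℝ} (hf : Summable f) : Dinv (stepAvg f) = stepAvg (Dinv f) := by
  ext w
  have hsub : Summable fun z : {z : ℤ // z ≤ w} => f z.1 :=
    hf.comp_injective Subtype.val_injective
  have hsub_shift : Summable fun z : {z : ℤ // z ≤ w} => f (z.1 - 1) :=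
    hf.comp_injective ((sub_left_injective (b := 1)).comp Subtype.val_injective)
  let e : {z : ℤ // z ≤ w} ≃ {z : ℤ // z ≤ w - 1} :=
    (Equiv.subRight 1).subtypeEquiv fun z => by simp
  have hshift : ∑' z : {z : ℤ // z ≤ w}, f (z.1 - 1) = Dinv f (w - 1) :=
    e.tsum_eq fun z => f z.1
  simp only [Dinv, stepAvg] at hshift ⊢
  rw [tsum_div_const, hsub.tsum_add hsub_shift, hshift]

lemma conv_phiB_s10 (f : ℤ → ℝ) : conv f phiB = stepAvg f := by
  ext z
  rw [conv, tsum_eq_sum (s := {z, z - 1}) fun s hs => ?_, Finset.sum_pair (by omega)]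
  · simp only [phiB, deltaK, stepAvg, sub_self, sub_sub_cancel, if_pos, zero_ne_one,
      one_ne_zero, if_false, add_zero, zero_add]
    ring
  · simp only [Finset.mem_insert, Finset.mem_singleton, not_or] at hs
    have h0 : z - s ≠ 0 := by omega
    have h1 : z - s ≠ 1 := by omega
    simp [phiB, deltaK, h0, h1]

lemma phiPow_succ (t : ℕ) : phiPow (t + 1) = stepAvg (phiPow t) :=
  conv_phiB_s10 (phiPow t)

lemma det_of_sum_rows_of_row_local {ι κ R : Type*} [DecidableEq ι] [Fintype ι] [Fintype κ]
    [CommRing R] (Q : (ι → κ) → Matrix ι ι R) (hQ : ∀ f i, Q f i = Q (fun _ => f i) i) :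
    det (of fun i => ∑ k, Q (fun _ => k) i) = ∑ f, det (Q f) := by
  calc det (of fun i => ∑ k, Q (fun _ => k) i)
      = ∑ f : ι → κ, det (of fun i => Q (fun _ => f i) i) :=
        detRowAlternating.toMultilinearMap.map_sum fun i k => Q (fun _ => k) i
    _ = ∑ f, det (Q f) := by
        refine Finset.sum_congr rfl fun f _ => congrArg det ?_
        ext i j
        exact congrFun (hQ f i).symm j

def shiftBy {ι : Type*} (x : ι → ℤ) (a : ι → Bool) : ι → ℤ :=
  fun i => x i + if a i then 1 else 0

noncomputable def qkerMatrix (n t : ℕ) (x : Fin (n+1) → ℤ) (y : Fin n → ℤ)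
    (x' : Fin (n+1) → ℤ) (y' : Fin n → ℤ) : Matrix (Fin (n+1) ⊕ Fin n) (Fin (n+1) ⊕ Fin n) ℝ :=
  Matrix.fromBlocks
    (Matrix.of fun i j : Fin (n+1) => phiPow t (x' j - x i))
    (Matrix.of fun (i : Fin (n+1)) (j : Fin n) =>
      Dinv (phiPow t) (y' j - x i) - if (i : ℕ) ≤ (j : ℕ) then 1 else 0)
    (Matrix.of fun (i : Fin n) (j : Fin (n+1)) => Dd (phiPow t) (x' j - y i))
    (Matrix.of fun i j : Fin n => phiPow t (y' j - y i))

section qkerMatrix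

variable (n t : ℕ) (x x' : Fin (n+1) → ℤ) (y y' : Fin n → ℤ)

lemma qker_eq_det : qker n t x y x' y' = (qkerMatrix n t x y x' y').det := rfl

noncomputable def qkerMatrixShifted (f : Fin (n+1) ⊕ Fin n → Bool) :
    Matrix (Fin (n+1) ⊕ Fin n) (Fin (n+1) ⊕ Fin n) ℝ :=
  qkerMatrix n t (shiftBy x (f ∘ Sum.inl)) (shiftBy y (f ∘ Sum.inr)) x' y'

lemma qkerMatrixShifted_row_local (f : Fin (n+1) ⊕ Fin n → Bool) (r : Fin (n+1) ⊕ Fin n) :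
    qkerMatrixShifted n t x x' y y' f r = qkerMatrixShifted n t x x' y y' (fun _ => f r) r := by
  ext c
  rcases r with i | i <;> rcases c with j | j <;> rfl

lemma qkerMatrix_succ :
    qkerMatrix n (t+1) x y x' y' =
      (2⁻¹ : ℝ) • of fun r => ∑ b : Bool, qkerMatrixShifted n t x x' y y' (fun _ => b) r := by
  ext r c
  simp only [Matrix.smul_apply, of_apply, Finset.sum_apply, smul_eq_mul]
  rcases r with i | i <;> rcases c with j | j <;>
    simp only [qkerMatrixShifted, qkerMatrix, shiftBy, fromBlocks_apply₁₁, fromBlocks_apply₁₂,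
      fromBlocks_apply₂₁, fromBlocks_apply₂₂, of_apply, Function.comp_apply]
  · rw [phiPow_succ, stepAvg_sub_eq_sum_bool]
  · rw [Finset.sum_sub_distrib, phiPow_succ, Dinv_stepAvg (summable_phiPow t),
      stepAvg_sub_eq_sum_bool]
    simp only [Finset.sum_const, Finset.card_univ, Fintype.card_bool, nsmul_eq_mul]
    ring
  · rw [phiPow_succ, Dd_stepAvg, stepAvg_sub_eq_sum_bool]
  · rw [phiPow_succ, stepAvg_sub_eq_sum_bool]

end qkerMatrix

/-- the discrete heat-type recursion
`q_{t+1}^n = Π_{i}(1 + (1/2)∇̄_{x_i}) Π_i (1 + (1/2)∇̄_{y_i}) q_t^n`,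
the product of the forward-difference operators being written out as the average
over all `{0,1}`-shifts of the starting configuration. -/
theorem qker_heat_recursion (n t : ℕ) (x x' : Fin (n+1) → ℤ) (y y' : Fin n → ℤ) :
    qker n (t+1) x y x' y' =
      (∑ a : Fin (n+1) → Bool, ∑ b : Fin n → Bool,
        qker n t (fun i => x i + if a i then 1 else 0)
          (fun i => y i + if b i then 1 else 0) x' y') / 2 ^ (2*n+1) := by
  rw [qker_eq_det, qkerMatrix_succ, det_smul,
    det_of_sum_rows_of_row_local _ (qkerMatrixShifted_row_local n t x x' y y'),
    ← Fintype.sum_prod_type', ← (Equiv.sumArrowEquivProdArrow _ _ Bool).sum_comp]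
  simp only [Fintype.card_sum, Fintype.card_fin, inv_pow, ← div_eq_inv_mul]
  congr 2
  omega
end

section
/- The deterministic initial condition and dynamics preserve interlacing: if integers X^{k}_i(t−1) satisfy X^k_i(t−1) ≤ X^{k−1}_i(t−1) < X^k_{i+1}(t−1) for all applicable i, k, and each particle is updated by X^j_i(t) = X^j_i(t−1) + β^j_i(t) − 1{X^j_i(t−1)+β^j_i(t) = X^{j−1}_i(t)+1} + 1{X^j_i(t−1)+β^j_i(t) = X^{j−1}_{i−1}(t)} (with the indicator terms absent when the corresponding index is out of range), where each β^j_i(t) ∈ {0,1} and lines are updated in order of increasing j, then the updated configuration again satisfies X^k_i(t) ≤ X^{k−1}_i(t) < X^k_{i+1}(t) for all applicable i, k. -/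
/-!
Induct on the line index. If the new line `k-1` stays within one step of the old one
(`X ≤ Y ≤ X + 1`) and is strictly increasing, then each particle of line `k` starts weakly
between its updated neighbours `Y^{k-1}_{i-1} ≤ X^k_i ≤ Y^{k-1}_i`; a jump of at most one,
corrected by the two indicators, lands it strictly above the lower neighbour and weakly below
the upper one, which is the new interlacing. The two indicators never fire together, since
`Y^{k-1}_{i-1} < Y^{k-1}_i`.
-/

/-- Interlacing for an array of lines: row `k` (0-based) represents `X^{k+1}`
and has `k+1` particles; the condition is `X^k_i ≤ X^{k-1}_i < X^k_{i+1}`. -/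
def arrInterlace (m : ℕ) (X : (k : Fin m) → Fin ((k : ℕ)+1) → ℤ) : Prop :=
  ∀ (k : ℕ) (hk : k + 1 < m) (i : Fin (k+1)),
    X ⟨k+1, hk⟩ i.castSucc ≤ X ⟨k, by omega⟩ i ∧
    X ⟨k, by omega⟩ i < X ⟨k+1, hk⟩ i.succ


/-- `u` (entries `0, …, n-1`) interlaces `v` (entries `0, …, n`). -/
def Interlaces (n : ℕ) (u v : ℕ → ℤ) : Prop :=
  ∀ i < n, v i ≤ u i ∧ u i < v (i + 1)

theorem Interlaces.lt_succ {n : ℕ} {u v : ℕ → ℤ} (h : Interlaces n u v) {i : ℕ}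
    (hi : i < n) : v i < v (i + 1) :=
  (h i hi).1.trans_lt (h i hi).2

/-- Update of line `k` (entries `0, …, k`) from its old values `x`, the coin flips `b` and the
already updated line `y'` below it (entries `0, …, k-1`). -/
def rowUpdate (k : ℕ) (x b y' : ℕ → ℤ) (i : ℕ) : ℤ :=
  x i + b i
    - (if i < k then if x i + b i = y' i + 1 then 1 else 0 else 0)
    + (if 1 ≤ i then if x i + b i = y' (i - 1) then 1 else 0 else 0)

section RowUpdate

variable {k i : ℕ} {x b y' : ℕ → ℤ}

theorem rowUpdate_bounds (hb : b i = 0 ∨ b i = 1) (hupper : i < k → x i ≤ y' i)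
    (hlower : 1 ≤ i → y' (i - 1) ≤ x i) (hgap : 1 ≤ i → i < k → y' (i - 1) < y' i) :
    (x i ≤ rowUpdate k x b y' i ∧ rowUpdate k x b y' i ≤ x i + 1) ∧
      (i < k → rowUpdate k x b y' i ≤ y' i) ∧
      (1 ≤ i → y' (i - 1) < rowUpdate k x b y' i) := by
  unfold rowUpdate
  split_ifs <;> omega

theorem rowUpdate_interlaces {x' y : ℕ → ℤ} (hx : Interlaces k x' x)
    (hy'_near : ∀ i < k, x' i ≤ y' i ∧ y' i ≤ x' i + 1)
    (hy'_mono : ∀ i, i + 1 < k → y' i < y' (i + 1))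
    (hb : ∀ i < k + 1, b i = 0 ∨ b i = 1) (hy : ∀ i < k + 1, y i = rowUpdate k x b y' i) :
    (∀ i < k + 1, x i ≤ y i ∧ y i ≤ x i + 1) ∧ Interlaces k y' y := by
  have bounds : ∀ i < k + 1, (x i ≤ y i ∧ y i ≤ x i + 1) ∧
      (i < k → y i ≤ y' i) ∧ (1 ≤ i → y' (i - 1) < y i) := by
    intro i hi
    rw [hy i hi]
    refine rowUpdate_bounds (hb i hi) (fun h => ?_) (fun h => ?_) (fun h h' => ?_)
    · exact (hx i h).1.trans (hy'_near i h).1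
    · obtain ⟨-, hlt⟩ := hx (i - 1) (by omega)
      have := (hy'_near (i - 1) (by omega)).2
      rw [Nat.sub_add_cancel h] at hlt
      omega
    · simpa [Nat.sub_add_cancel h] using hy'_mono (i - 1) (by omega)
  refine ⟨fun i hi => (bounds i hi).1, fun i hi => ⟨(bounds i (by omega)).2.1 hi, ?_⟩⟩
  simpa using (bounds (i + 1) (by omega)).2.2 (by omega)

end RowUpdate

theorem interlacing_preserved (m : ℕ) (x y b : ℕ → ℕ → ℤ)
    (hb : ∀ k < m, ∀ i < k + 1, b k i = 0 ∨ b k i = 1)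
    (hx : ∀ k, k + 1 < m → Interlaces (k + 1) (x k) (x (k + 1)))
    (hy : ∀ k < m, ∀ i < k + 1, y k i = rowUpdate k (x k) (b k) (y (k - 1)) i) :
    ∀ k, k + 1 < m → Interlaces (k + 1) (y k) (y (k + 1)) := by
  have step : ∀ k, k + 1 < m → (∀ i < k + 1, x k i ≤ y k i ∧ y k i ≤ x k i + 1) →
      (∀ i < k, y k i < y k (i + 1)) →
      (∀ i < k + 1 + 1, x (k + 1) i ≤ y (k + 1) i ∧ y (k + 1) i ≤ x (k + 1) i + 1) ∧
        Interlaces (k + 1) (y k) (y (k + 1)) := fun k hk hnear hmono =>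
    rowUpdate_interlaces (hx k hk) hnear (fun i hi => hmono i (by omega)) (hb _ hk) (hy _ hk)
  have invariant : ∀ k < m, (∀ i < k + 1, x k i ≤ y k i ∧ y k i ≤ x k i + 1) ∧
      ∀ i < k, y k i < y k (i + 1) := by
    intro k
    induction k with
    | zero =>
      intro hm
      exact ⟨(rowUpdate_interlaces (x' := x 0) (y' := y 0) (by simp [Interlaces]) (by simp)
        (by simp) (hb 0 hm) (hy 0 hm)).1, by simp⟩
    | succ k ih =>
      intro hk
      obtain ⟨hnear, hmono⟩ := ih (by omega)
      obtain ⟨hnear', hinter⟩ := step k hk hnear hmono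
      exact ⟨hnear', fun i hi => hinter.lt_succ hi⟩
  intro k hk
  obtain ⟨hnear, hmono⟩ := invariant k (by omega)
  exact (step k hk hnear hmono).2

/-- Line `k` of a triangular array as a sequence, with junk value `0` outside the triangle. -/
def row {m : ℕ} (X : (k : Fin m) → Fin ((k : ℕ) + 1) → ℤ) (k i : ℕ) : ℤ :=
  if h : k < m ∧ i < k + 1 then X ⟨k, h.1⟩ ⟨i, h.2⟩ else 0

section Row

variable {m : ℕ} {X : (k : Fin m) → Fin ((k : ℕ) + 1) → ℤ}

theorem row_mk {k i : ℕ} (hk : k < m) (hi : i < k + 1) : row X k i = X ⟨k, hk⟩ ⟨i, hi⟩ :=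
  dif_pos ⟨hk, hi⟩

theorem arrInterlace_iff_interlaces_row :
    arrInterlace m X ↔ ∀ k, k + 1 < m → Interlaces (k + 1) (row X k) (row X (k + 1)) := by
  refine forall_congr' fun k => forall_congr' fun hk => ?_
  refine ⟨fun h i hi => ?_, fun h i => ?_⟩
  · rw [row_mk (by omega) hi, row_mk hk (by omega), row_mk hk (by omega)]
    exact h ⟨i, hi⟩
  · have := h i i.2
    rwa [row_mk (by omega) i.2, row_mk hk (by omega), row_mk hk (by omega)] at this

end Row

/-- the shuffling dynamics preserves interlacing, for any choice of
the Bernoulli variables `β`.  Line `k` is updated using the already updated line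
`k-1`; the pushing indicator terms are absent at out-of-range indices. -/
theorem dynamics_preserves_interlacing (m : ℕ)
    (X Y β : (k : Fin m) → Fin ((k : ℕ)+1) → ℤ)
    (hβ : ∀ k i, β k i = 0 ∨ β k i = 1)
    (hX : arrInterlace m X)
    (hY : ∀ (k : ℕ) (hk : k < m) (i : Fin (k+1)),
      Y ⟨k, hk⟩ i = X ⟨k, hk⟩ i + β ⟨k, hk⟩ i
        - (if h : (i : ℕ) < k then
            (if X ⟨k, hk⟩ i + β ⟨k, hk⟩ i
                = Y ⟨k-1, by omega⟩ ⟨(i : ℕ), by show (i : ℕ) < k - 1 + 1; omega⟩ + 1 then 1 else 0)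
          else 0)
        + (if h : 1 ≤ (i : ℕ) then
            (if X ⟨k, hk⟩ i + β ⟨k, hk⟩ i
                = Y ⟨k-1, by omega⟩ ⟨(i : ℕ) - 1, by show (i : ℕ) - 1 < k - 1 + 1; omega⟩ then 1 else 0)
          else 0)) :
    arrInterlace m Y := by
  have hY_row : ∀ k < m, ∀ i < k + 1,
      row Y k i = rowUpdate k (row X k) (row β k) (row Y (k - 1)) i := by
    intro k hk i hi
    have := hY k hk ⟨i, hi⟩
    simp only [← row_mk] at this
    simpa [rowUpdate] using this
  rw [arrInterlace_iff_interlaces_row] at hX ⊢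
  refine interlacing_preserved m _ _ (row β) (fun k hk i hi => ?_) hX hY_row
  rw [row_mk hk hi]
  exact hβ _ _
end
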